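/- arXiv:1807.06764 — 3 statements merged into one kernel-verified Lean document; each statement's English description precedes it below -/
import Mathlib

section
/- Let σ_{i,j} > 0 satisfy the strict triangle inequality with gap ε > 0 (i.e., max over distinct i,j,k of σ_{i,j} − σ_{i,k} − σ_{k,j} = −ε), and suppose the reciprocal mobilities violate the triangle inequality with defect M > 0 (i.e., max over distinct i,j,k of μ_{i,j}^{−1} − μ_{i,k}^{−1} − μ_{k,j}^{−1} = M). If α > β > 0 satisfy √α·√β·M < √π·ε, then c_{i,j} = (√π/(√α+√β))σ_{i,j} + (√α√β/(√α+√β))μ_{i,j}^{−1} satisfies the strict triangle inequality. -/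
open Real

/-- if σ satisfies the strict triangle inequality with gap ε > 0, the
    reciprocal mobilities violate the triangle inequality with defect M > 0, and
    √α·√β·M < √π·ε, then c_{i,j} = (√π/(√α+√β))σ_{i,j} + (√α√β/(√α+√β))μ_{i,j}⁻¹
    satisfies the strict triangle inequality. -/
theorem stmt_7 {ι : Type*} (σ invμ : ι → ι → ℝ) (ε M α β : ℝ)
    (hε : 0 < ε) (hM : 0 < M) (hβ : 0 < β) (hαβ : β < α)
    (hσpos : ∀ i j, i ≠ j → 0 < σ i j) (hμpos : ∀ i j, i ≠ j → 0 < invμ i j)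
    (hσle : ∀ i j k, i ≠ j → i ≠ k → j ≠ k → σ i j - σ i k - σ k j ≤ -ε)
    (hσeq : ∃ i j k, i ≠ j ∧ i ≠ k ∧ j ≠ k ∧ σ i j - σ i k - σ k j = -ε)
    (hμle : ∀ i j k, i ≠ j → i ≠ k → j ≠ k → invμ i j - invμ i k - invμ k j ≤ M)
    (hμeq : ∃ i j k, i ≠ j ∧ i ≠ k ∧ j ≠ k ∧ invμ i j - invμ i k - invμ k j = M)
    (hαβM : Real.sqrt α * Real.sqrt β * M < Real.sqrt π * ε) :
    ∀ i j k, i ≠ j → i ≠ k → j ≠ k →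
      Real.sqrt π / (Real.sqrt α + Real.sqrt β) * σ i j +
          Real.sqrt α * Real.sqrt β / (Real.sqrt α + Real.sqrt β) * invμ i j
        < (Real.sqrt π / (Real.sqrt α + Real.sqrt β) * σ i k +
            Real.sqrt α * Real.sqrt β / (Real.sqrt α + Real.sqrt β) * invμ i k) +
          (Real.sqrt π / (Real.sqrt α + Real.sqrt β) * σ k j +
            Real.sqrt α * Real.sqrt β / (Real.sqrt α + Real.sqrt β) * invμ k j) := by
  intro i j k hij hik hjk
  have hsβ : 0 < Real.sqrt β := Real.sqrt_pos.mpr hβ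
  have hsα : 0 < Real.sqrt α := Real.sqrt_pos.mpr (hβ.trans hαβ)
  have hden : 0 < Real.sqrt α + Real.sqrt β := by linarith
  have hπ : 0 ≤ Real.sqrt π := Real.sqrt_nonneg π
  have h1 : Real.sqrt π * (σ i j - σ i k - σ k j) ≤ Real.sqrt π * (-ε) :=
    mul_le_mul_of_nonneg_left (hσle i j k hij hik hjk) hπ
  have h2 : Real.sqrt α * Real.sqrt β * (invμ i j - invμ i k - invμ k j)
      ≤ Real.sqrt α * Real.sqrt β * M :=
    mul_le_mul_of_nonneg_left (hμle i j k hij hik hjk) (by positivity)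
  rw [← sub_pos]
  have key : Real.sqrt π * (σ i k + σ k j - σ i j)
      + Real.sqrt α * Real.sqrt β * (invμ i k + invμ k j - invμ i j) > 0 := by
    nlinarith
  have := div_pos key hden
  calc (0:ℝ) < (Real.sqrt π * (σ i k + σ k j - σ i j)
      + Real.sqrt α * Real.sqrt β * (invμ i k + invμ k j - invμ i j))
      / (Real.sqrt α + Real.sqrt β) := this
    _ = _ := by field_simp; ring
end

section
/- In the 1-D counterexample, with u_{1,ε} = 1_{[ε,∞)}, u_{3,ε} = 1_{[−ε,ε]}, and kernel K_{1,3}(h) = δ₁·(1_{[−11,−9]}(h) + 1_{[9,11]}(h)) + δ₂·1_{[−1,1]}(h), the rescaled interaction energy satisfies (1/ε)·∫_ℝ ∫_ℝ 1_{[ε,∞)}(x)·K_{1,3}(h)·1_{[−ε,ε]}(x − εh) dh dx = 4δ₁ + δ₂/2 for every ε > 0. -/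
/-!
By Fubini, integrate in `x` first: the factor `1_{[ε,∞)}(x) · 1_{[-ε,ε]}(x - εh)` has integral
`ε · |[1, ∞) ∩ [h - 1, h + 1]|`, which is `0` for `h ≤ 0`, `h` for `0 ≤ h ≤ 2` and `2` for `h ≥ 2`.
So the plateau of the kernel on `[-11, -9]` contributes nothing, the one on `[9, 11]` contributes
`2 · 2 δ₁`, and the one on `[-1, 1]` contributes `δ₂ ∫₀¹ h dh`; the factors `ε` cancel.
Integrability on `ℝ × ℝ` holds because the integrand is dominated by `|K(h)| · 1_{[-ε,ε]}(x - εh)`.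
-/

open Real Set MeasureTheory

lemma integral_indicator_one_mul_indicator_one {X : Type*} [MeasurableSpace X] (μ : Measure X)
    {s t : Set X} (hs : MeasurableSet s) (ht : MeasurableSet t) :
    ∫ x, s.indicator (1 : X → ℝ) x * t.indicator 1 x ∂μ = μ.real (s ∩ t) := by
  rw [← integral_indicator_one (hs.inter ht), inter_indicator_one]
  rfl

lemma indicator_one_sub_Icc (a b x y : ℝ) :
    (Icc a b).indicator (1 : ℝ → ℝ) (x - y) = (Icc (a + y) (b + y)).indicator 1 x := by
  simp only [indicator_apply, sub_mem_Icc_iff_left, Pi.one_apply]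

lemma integrable_indicator_one_Icc (a b : ℝ) : Integrable ((Icc a b).indicator (1 : ℝ → ℝ)) :=
  (integrable_indicator_iff measurableSet_Icc).2 (integrableOn_const measure_Icc_lt_top.ne)

lemma integrable_mul_indicator_Icc_sub_mul {k : ℝ → ℝ} (hk : Integrable k) (a b c : ℝ) :
    Integrable (fun p : ℝ × ℝ => k p.2 * (Icc a b).indicator (1 : ℝ → ℝ) (p.1 - c * p.2))
      (volume.prod volume) := by
  have hmeas : AEStronglyMeasurable
      (fun p : ℝ × ℝ => k p.2 * (Icc a b).indicator (1 : ℝ → ℝ) (p.1 - c * p.2))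
      (volume.prod volume) :=
    hk.1.comp_snd.mul
      ((measurable_one.indicator measurableSet_Icc).comp (by fun_prop)).aestronglyMeasurable
  have hnorm (h : ℝ) :
      ∫ x, ‖k h * (Icc a b).indicator (1 : ℝ → ℝ) (x - c * h)‖ = ‖k h‖ * max (b - a) 0 := by
    simp_rw [norm_mul, indicator_one_sub_Icc, norm_indicator_eq_indicator_norm, Pi.one_apply,
      norm_one, ← Pi.one_def]
    rw [integral_const_mul, integral_indicator_one measurableSet_Icc, volume_real_Icc]
    ring_nf
  refine (integrable_prod_iff' hmeas).2 ⟨.of_forall fun h => ?_, ?_⟩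
  · simp_rw [indicator_one_sub_Icc]
    exact (integrable_indicator_one_Icc _ _).const_mul _
  · simp_rw [hnorm]
    exact hk.norm.mul_const _

lemma integrable_indicator_mul_mul_indicator_Icc_sub_mul {k : ℝ → ℝ} (hk : Integrable k)
    {s : Set ℝ} (hs : MeasurableSet s) (a b c : ℝ) :
    Integrable (fun p : ℝ × ℝ =>
        s.indicator (1 : ℝ → ℝ) p.1 * k p.2 * (Icc a b).indicator 1 (p.1 - c * p.2))
      (volume.prod volume) := by
  simp_rw [mul_assoc]
  refine (integrable_mul_indicator_Icc_sub_mul hk a b c).bdd_mul (c := 1)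
    ((measurable_one.indicator hs).comp measurable_fst).aestronglyMeasurable (.of_forall fun p => ?_)
  by_cases hp : p.1 ∈ s <;> simp [hp]

noncomputable def kernel13 (δ1 δ2 h : ℝ) : ℝ :=
  δ1 * ((Icc (-11 : ℝ) (-9)).indicator 1 h + (Icc (9 : ℝ) 11).indicator 1 h) +
    δ2 * (Icc (-1 : ℝ) 1).indicator 1 h

lemma integrable_kernel13 (δ1 δ2 : ℝ) : Integrable (kernel13 δ1 δ2) :=
  (((integrable_indicator_one_Icc _ _).add (integrable_indicator_one_Icc _ _)).const_mul δ1).add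
    ((integrable_indicator_one_Icc _ _).const_mul δ2)

lemma integral_kernel13_mul (δ1 δ2 : ℝ) {g : ℝ → ℝ} (hg : Continuous g) :
    ∫ h, kernel13 δ1 δ2 h * g h =
      δ1 * ((∫ h in Icc (-11) (-9), g h) + ∫ h in Icc 9 11, g h) + δ2 * ∫ h in Icc (-1) 1, g h := by
  have hind (a b h : ℝ) : (Icc a b).indicator (1 : ℝ → ℝ) h * g h = (Icc a b).indicator g h := by
    by_cases hh : h ∈ Icc a b <;> simp [hh]
  have hint (a b : ℝ) : Integrable ((Icc a b).indicator g) :=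
    hg.integrableOn_Icc.integrable_indicator measurableSet_Icc
  have hsplit (h : ℝ) : kernel13 δ1 δ2 h * g h = δ1 * (Icc (-11) (-9)).indicator g h +
      δ1 * (Icc 9 11).indicator g h + δ2 * (Icc (-1) 1).indicator g h := by
    simp only [kernel13, ← hind]
    ring
  simp_rw [hsplit]
  rw [integral_add, integral_add, integral_const_mul,
    integral_const_mul, integral_const_mul, integral_indicator measurableSet_Icc,
    integral_indicator measurableSet_Icc, integral_indicator measurableSet_Icc]
  · ring
  all_goals fun_prop

/-- The length of `[1, ∞) ∩ [h - 1, h + 1]`. -/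
noncomputable def overlap (h : ℝ) : ℝ := max (h + 1 - max 1 (h - 1)) 0

lemma continuous_overlap : Continuous overlap := by
  unfold overlap
  fun_prop

lemma overlap_of_nonpos {h : ℝ} (hh : h ≤ 0) : overlap h = 0 :=
  max_eq_right (by linarith [le_max_left 1 (h - 1)])

lemma overlap_of_nonneg_of_le_two {h : ℝ} (h0 : 0 ≤ h) (h2 : h ≤ 2) : overlap h = h := by
  rw [overlap, max_eq_left (by linarith : h - 1 ≤ 1), max_eq_left (by linarith)]
  ring

lemma overlap_of_two_le {h : ℝ} (hh : 2 ≤ h) : overlap h = 2 := by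
  rw [overlap, max_eq_right (by linarith : 1 ≤ h - 1), max_eq_left (by linarith)]
  ring

lemma integral_indicator_Ici_mul_indicator_Icc_sub {ε : ℝ} (hε : 0 ≤ ε) (h : ℝ) :
    ∫ x, (Ici ε).indicator (1 : ℝ → ℝ) x * (Icc (-ε) ε).indicator 1 (x - ε * h) = ε * overlap h := by
  simp_rw [indicator_one_sub_Icc]
  rw [integral_indicator_one_mul_indicator_one _ measurableSet_Ici measurableSet_Icc,
    ← Ici_inter_Iic, ← inter_assoc, Ici_inter_Ici, Ici_inter_Iic, volume_real_Icc, overlap,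
    mul_max_of_nonneg _ _ hε, mul_sub, mul_max_of_nonneg _ _ hε]
  ring_nf

lemma setIntegral_overlap_of_nonpos {a b : ℝ} (hb : b ≤ 0) : ∫ h in Icc a b, overlap h = 0 := by
  rw [setIntegral_congr_fun measurableSet_Icc fun h hh => overlap_of_nonpos (hh.2.trans hb)]
  simp

lemma setIntegral_overlap_of_two_le {a b : ℝ} (ha : 2 ≤ a) (hab : a ≤ b) :
    ∫ h in Icc a b, overlap h = 2 * (b - a) := by
  rw [setIntegral_congr_fun measurableSet_Icc fun h hh => overlap_of_two_le (ha.trans hh.1),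
    setIntegral_const, volume_real_Icc, max_eq_left (sub_nonneg.2 hab), smul_eq_mul, mul_comm]

lemma setIntegral_overlap_Icc_neg_one_one : ∫ h in Icc (-1 : ℝ) 1, overlap h = 1 / 2 := by
  have hi (a b : ℝ) : IntervalIntegrable overlap volume a b :=
    continuous_overlap.intervalIntegrable a b
  rw [integral_Icc_eq_integral_Ioc, ← intervalIntegral.integral_of_le (by norm_num),
    ← intervalIntegral.integral_add_adjacent_intervals (hi (-1) 0) (hi 0 1),
    intervalIntegral.integral_congr (g := fun _ => 0) fun h hh => overlap_of_nonpos ?_,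
    intervalIntegral.integral_congr (g := fun x => x) fun h hh => overlap_of_nonneg_of_le_two ?_ ?_]
  · simp
  all_goals
    rw [uIcc_of_le (by norm_num)] at hh
    linarith [hh.1, hh.2]

theorem stmt_13_general (δ1 δ2 : ℝ) (ε : ℝ) (hε : 0 < ε) :
    (1 / ε) * ∫ x : ℝ, ∫ h : ℝ,
        (Ici ε).indicator (fun _ => (1 : ℝ)) x *
        (δ1 * ((Icc (-11 : ℝ) (-9)).indicator (fun _ => (1 : ℝ)) h +
               (Icc (9 : ℝ) 11).indicator (fun _ => (1 : ℝ)) h) +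
         δ2 * (Icc (-1 : ℝ) 1).indicator (fun _ => (1 : ℝ)) h) *
        (Icc (-ε) ε).indicator (fun _ => (1 : ℝ)) (x - ε * h)
      = 4 * δ1 + δ2 / 2 := by
  change (1 / ε) * ∫ x, ∫ h, (Ici ε).indicator 1 x * kernel13 δ1 δ2 h *
    (Icc (-ε) ε).indicator 1 (x - ε * h) = _
  have hinner (h : ℝ) : ∫ x, (Ici ε).indicator (1 : ℝ → ℝ) x * kernel13 δ1 δ2 h *
      (Icc (-ε) ε).indicator 1 (x - ε * h) = ε * (kernel13 δ1 δ2 h * overlap h) := by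
    simp_rw [mul_right_comm _ (kernel13 δ1 δ2 h)]
    rw [integral_mul_const, integral_indicator_Ici_mul_indicator_Icc_sub hε.le]
    ring
  rw [integral_integral_swap (integrable_indicator_mul_mul_indicator_Icc_sub_mul
      (integrable_kernel13 δ1 δ2) measurableSet_Ici (-ε) ε ε)]
  simp_rw [hinner]
  rw [integral_const_mul, integral_kernel13_mul δ1 δ2 continuous_overlap,
    setIntegral_overlap_of_nonpos (by norm_num),
    setIntegral_overlap_of_two_le (by norm_num) (by norm_num), setIntegral_overlap_Icc_neg_one_one]
  field_simp
  ring

/-- the rescaled (1,3)-interaction energy in the 1-D counterexample equals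
    4δ₁ + δ₂/2 for every ε > 0. -/
theorem stmt_13 (δ1 δ2 : ℝ) (h1 : 0 < δ1) (h2 : 0 < δ2) (ε : ℝ) (hε : 0 < ε) :
    (1 / ε) * ∫ x : ℝ, ∫ h : ℝ,
        (Ici ε).indicator (fun _ => (1 : ℝ)) x *
        (δ1 * ((Icc (-11 : ℝ) (-9)).indicator (fun _ => (1 : ℝ)) h +
               (Icc (9 : ℝ) 11).indicator (fun _ => (1 : ℝ)) h) +
         δ2 * (Icc (-1 : ℝ) 1).indicator (fun _ => (1 : ℝ)) h) *
        (Icc (-ε) ε).indicator (fun _ => (1 : ℝ)) (x - ε * h)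
      = 4 * δ1 + δ2 / 2 :=
  stmt_13_general δ1 δ2 ε hε
end

section
/- With δ₁ = 1/64 and δ₂ = 5/16, the 3×3 surface tension matrix σ with σ_{1,2} = 1/2 and σ_{1,3} = σ_{2,3} = 20δ₁ + δ₂/2 = 15/32 satisfies the triangle inequality and is conditionally negative semi-definite, the reciprocal mobility matrix 1/μ with (1/μ)_{1,2} = 2 and (1/μ)_{1,3} = (1/μ)_{2,3} = 2δ₂ = 5/8 is conditionally negative semi-definite but violates the triangle inequality, and nevertheless 16δ₁ + 2δ₂ = 7/8 < 1 = 2σ_{1,2}. -/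
open Matrix

/-!
Both matrices have the isosceles shape `!![0, a, b; a, 0, b; b, b, 0]`. For such a matrix and
`v` with `v 0 + v 1 + v 2 = 0`, the quadratic form is `2 (a v₀ v₁ - b (v₀ + v₁)²)`, which is
nonpositive as soon as `0 ≤ a ≤ 4b` because `4 v₀ v₁ ≤ (v₀ + v₁)²`; the triangle inequality,
on the other hand, holds for `a ≥ 0` exactly when `a ≤ 2b`. Here `a / b` is `16/15` for `σ`
and `16/5` for `1/μ`, which lies between `2` and `4`.
-/

def Matrix.IsCondNegSemidef {n : Type*} [Fintype n] (M : Matrix n n ℝ) : Prop :=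
  ∀ v : n → ℝ, ∑ i, v i = 0 → v ⬝ᵥ M *ᵥ v ≤ 0

def Matrix.SatisfiesTriangleIneq {n : Type*} (M : Matrix n n ℝ) : Prop :=
  ∀ i j k : n, i ≠ j → i ≠ k → j ≠ k → M i j ≤ M i k + M k j

theorem Matrix.isCondNegSemidef_iff_fin_three {M : Matrix (Fin 3) (Fin 3) ℝ} :
    M.IsCondNegSemidef ↔ ∀ v : Fin 3 → ℝ, v 0 + v 1 + v 2 = 0 → v ⬝ᵥ M *ᵥ v ≤ 0 := by
  simp only [IsCondNegSemidef, Fin.sum_univ_three]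

abbrev isoscelesMatrix (a b : ℝ) : Matrix (Fin 3) (Fin 3) ℝ :=
  !![0, a, b; a, 0, b; b, b, 0]

section Isosceles

variable {a b : ℝ}

theorem isoscelesMatrix_dotProduct_mulVec {v : Fin 3 → ℝ} (hv : v 0 + v 1 + v 2 = 0) :
    v ⬝ᵥ isoscelesMatrix a b *ᵥ v = 2 * (a * v 0 * v 1 - b * (v 0 + v 1) ^ 2) := by
  have hv2 : v 2 = -(v 0 + v 1) := by linarith
  simp only [dotProduct, mulVec, Fin.sum_univ_three, hv2, of_apply, cons_val', cons_val_zero,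
    cons_val_one, cons_val, cons_val_fin_one]
  ring

theorem isoscelesMatrix_isCondNegSemidef (ha : 0 ≤ a) (hab : a ≤ 4 * b) :
    (isoscelesMatrix a b).IsCondNegSemidef := by
  rw [isCondNegSemidef_iff_fin_three]
  intro v hv
  rw [isoscelesMatrix_dotProduct_mulVec hv]
  have hamgm : 4 * (v 0 * v 1) ≤ (v 0 + v 1) ^ 2 := by nlinarith [sq_nonneg (v 0 - v 1)]
  nlinarith [sq_nonneg (v 0 + v 1)]

theorem isoscelesMatrix_satisfiesTriangleIneq (ha : 0 ≤ a) (hab : a ≤ 2 * b) :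
    (isoscelesMatrix a b).SatisfiesTriangleIneq := by
  intro i j k hij hik hjk
  fin_cases i <;> fin_cases j <;> fin_cases k <;> simp_all <;> linarith

theorem isoscelesMatrix_triangle_lt (hab : 2 * b < a) :
    isoscelesMatrix a b 0 2 + isoscelesMatrix a b 2 1 < isoscelesMatrix a b 0 1 := by
  simpa [two_mul] using hab

end Isosceles

/-- with δ₁ = 1/64, δ₂ = 5/16: the surface tension matrix σ (σ_{1,2} = 1/2,
    σ_{1,3} = σ_{2,3} = 20δ₁ + δ₂/2 = 15/32) satisfies the triangle inequality and is
    conditionally negative semi-definite; the reciprocal mobility matrix ((1/μ)_{1,2} = 2,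
    (1/μ)_{1,3} = (1/μ)_{2,3} = 2δ₂ = 5/8) is conditionally negative semi-definite but
    violates the triangle inequality; and 16δ₁ + 2δ₂ = 7/8 < 1 = 2σ_{1,2}. -/
theorem stmt_16 (δ1 δ2 : ℝ) (hδ1 : δ1 = 1 / 64) (hδ2 : δ2 = 5 / 16)
    (σ invμ : Matrix (Fin 3) (Fin 3) ℝ)
    (hσ : σ = !![0, 1/2, 20 * δ1 + δ2 / 2; 1/2, 0, 20 * δ1 + δ2 / 2;
                 20 * δ1 + δ2 / 2, 20 * δ1 + δ2 / 2, 0])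
    (hμ : invμ = !![0, 2, 2 * δ2; 2, 0, 2 * δ2; 2 * δ2, 2 * δ2, 0]) :
    (20 * δ1 + δ2 / 2 = 15 / 32) ∧
    (∀ i j k : Fin 3, i ≠ j → i ≠ k → j ≠ k → σ i j ≤ σ i k + σ k j) ∧
    (∀ v : Fin 3 → ℝ, v 0 + v 1 + v 2 = 0 → v ⬝ᵥ σ.mulVec v ≤ 0) ∧
    (∀ v : Fin 3 → ℝ, v 0 + v 1 + v 2 = 0 → v ⬝ᵥ invμ.mulVec v ≤ 0) ∧
    (∃ i j k : Fin 3, i ≠ j ∧ i ≠ k ∧ j ≠ k ∧ invμ i k + invμ k j < invμ i j) ∧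
    (16 * δ1 + 2 * δ2 = 7 / 8 ∧ 16 * δ1 + 2 * δ2 < 2 * σ 0 1 ∧ 2 * σ 0 1 = 1) := by
  subst hδ1 hδ2
  change σ = isoscelesMatrix _ _ at hσ
  change invμ = isoscelesMatrix _ _ at hμ
  subst hσ hμ
  refine ⟨by norm_num,
    isoscelesMatrix_satisfiesTriangleIneq (by norm_num) (by norm_num),
    isCondNegSemidef_iff_fin_three.mp
      (isoscelesMatrix_isCondNegSemidef (by norm_num) (by norm_num)),
    isCondNegSemidef_iff_fin_three.mp
      (isoscelesMatrix_isCondNegSemidef (by norm_num) (by norm_num)),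
    ⟨0, 1, 2, by decide, by decide, by decide, isoscelesMatrix_triangle_lt (by norm_num)⟩,
    by norm_num, by norm_num, by norm_num⟩
end
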